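/- Let Ω ⊆ ℍ be an axially symmetric s-domain, let f, g : Ω → ℍ be slice regular, fix I, J ∈ 𝕊 with I ⊥ J, and split f(z) = F(z)+G(z)·J and g(z) = H(z)+K(z)·J on Ω ∩ L_I with F, G, H, K holomorphic into L_I. Let f∗g denote the unique slice regular function on Ω whose restriction to Ω ∩ L_I equals (FH − G·conj(K∘conj)) + (FK + G·conj(H∘conj))·J; for a slice regular function p with splitting p = P + Q·J on Ω ∩ L_I, let p^c denote the unique slice regular function on Ω whose restriction to Ω ∩ L_I equals conj(P∘conj) − Q·J. Then (f∗g)^c = g^c ∗ f^c on Ω. -/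

import Mathlib

open Quaternion

noncomputable section

/-- The 2-sphere of imaginary units in the quaternions. -/
def SpH : Set ℍ[ℝ] := {q | q.re = 0 ∧ ‖q‖ = 1}

/-- The slice (complex plane) `L_I = {x + y I : x, y ∈ ℝ}`. -/
def sliceL (I : ℍ[ℝ]) : Set ℍ[ℝ] := {q | ∃ x y : ℝ, q = (x : ℍ[ℝ]) + y • I}

/-- `f` has continuous partial derivatives on the `I`-slice part of `Ω` and satisfies the
Cauchy–Riemann equation `∂f/∂x + I ∂f/∂y = 0` there. -/
def SliceHolomorphicOn (I : ℍ[ℝ]) (f : ℍ[ℝ] → ℍ[ℝ]) (Ω : Set ℍ[ℝ]) : Prop :=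
  ∃ fx fy : ℝ → ℝ → ℍ[ℝ],
    (∀ x y : ℝ, (x : ℍ[ℝ]) + y • I ∈ Ω →
      HasDerivAt (fun t : ℝ => f ((t : ℍ[ℝ]) + y • I)) (fx x y) x) ∧
    (∀ x y : ℝ, (x : ℍ[ℝ]) + y • I ∈ Ω →
      HasDerivAt (fun t : ℝ => f ((x : ℍ[ℝ]) + t • I)) (fy x y) y) ∧
    ContinuousOn (fun p : ℝ × ℝ => fx p.1 p.2) {p : ℝ × ℝ | (p.1 : ℍ[ℝ]) + p.2 • I ∈ Ω} ∧
    ContinuousOn (fun p : ℝ × ℝ => fy p.1 p.2) {p : ℝ × ℝ | (p.1 : ℍ[ℝ]) + p.2 • I ∈ Ω} ∧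
    ∀ x y : ℝ, (x : ℍ[ℝ]) + y • I ∈ Ω → fx x y + I * fy x y = 0

/-- `f` is slice regular on `Ω`. -/
def SliceRegularOn (f : ℍ[ℝ] → ℍ[ℝ]) (Ω : Set ℍ[ℝ]) : Prop :=
  ∀ I ∈ SpH, SliceHolomorphicOn I f Ω

/-- `Ω` is axially symmetric. -/
def AxSymm (Ω : Set ℍ[ℝ]) : Prop :=
  ∀ (x y : ℝ), ∀ I ∈ SpH, (x : ℍ[ℝ]) + y • I ∈ Ω → ∀ J ∈ SpH, (x : ℍ[ℝ]) + y • J ∈ Ω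

/-- `Ω` is an s-domain: a domain meeting the real axis whose slices are connected. -/
def IsSDomain (Ω : Set ℍ[ℝ]) : Prop :=
  IsOpen Ω ∧ IsConnected Ω ∧ (∃ x : ℝ, (x : ℍ[ℝ]) ∈ Ω) ∧
    ∀ I ∈ SpH, IsConnected (Ω ∩ sliceL I)

/-- The axially symmetric completion of a set `S ⊆ ℍ`. -/
def symmComp (S : Set ℍ[ℝ]) : Set ℍ[ℝ] :=
  {q | ∃ (x y : ℝ) (I : ℍ[ℝ]), I ∈ SpH ∧ q = (x : ℍ[ℝ]) + y • I ∧
    ∃ J ∈ SpH, (x : ℍ[ℝ]) + y • J ∈ S}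

/-- A domain of the slice `L_I`: a nonempty connected relatively open subset of `L_I`. -/
def IsSliceDomain (I : ℍ[ℝ]) (D : Set ℍ[ℝ]) : Prop :=
  D ⊆ sliceL I ∧ IsConnected D ∧ IsOpen {p : ℝ × ℝ | (p.1 : ℍ[ℝ]) + p.2 • I ∈ D}

/-!
Both sides are slice regular on `Ω`, so by the identity principle it suffices that they agree at
the real points of `Ω`. There `x̄ = x`, and `F x, G x, H x, K x` lie in the commutative field
`L_I`; the two defining formulas then coincide after commuting `F x K x` and `G x · conj (H x)`.

The identity principle on a slice `L_u`: choose `d ≠ 0` with `i d = d u`. Then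
`z ↦ d f(Re z + (Im z) u)` satisfies the Cauchy–Riemann equations for the left `ℂ`-structure of
`ℍ`, hence is holomorphic on the connected open set `{z | Re z + (Im z) u ∈ Ω}`, and two such
functions agreeing on a real interval agree everywhere.
-/

open Set Filter Topology Asymptotics

section PartialDerivatives

variable {E : Type*} [NormedAddCommGroup E] [NormedSpace ℝ E]

theorem norm_sub_sub_smul_le_of_hasDerivAt {φ φ' : ℝ → E} {v : E} {C a b : ℝ}
    (hφ : ∀ t ∈ uIcc a b, HasDerivAt φ (φ' t) t) (hC : ∀ t ∈ uIcc a b, ‖φ' t - v‖ ≤ C) :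
    ‖φ b - φ a - (b - a) • v‖ ≤ C * ‖b - a‖ := by
  have hψ : ∀ t ∈ uIcc a b,
      HasDerivWithinAt (fun s => φ s - s • v) (φ' t - v) (uIcc a b) t := fun t ht => by
    have h := ((hφ t ht).sub ((hasDerivAt_id' t).smul_const v)).hasDerivWithinAt (s := uIcc a b)
    rwa [one_smul] at h
  calc ‖φ b - φ a - (b - a) • v‖ = ‖(φ b - b • v) - (φ a - a • v)‖ := by
        rw [sub_smul]; congr 1; abel
    _ ≤ C * ‖b - a‖ := Convex.norm_image_sub_le_of_norm_hasDerivWithin_le hψ hC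
        (convex_uIcc a b) left_mem_uIcc right_mem_uIcc

theorem Complex.dist_mk_im_le_of_mem_uIcc {z w : ℂ} {t : ℝ} (ht : t ∈ uIcc z.re w.re) :
    dist (⟨t, w.im⟩ : ℂ) z ≤ dist w z := by
  rw [Complex.dist_eq_re_im, Complex.dist_eq_re_im]
  exact Real.sqrt_le_sqrt (add_le_add_left (sq_le_sq.2 (abs_sub_left_of_mem_uIcc ht)) _)

theorem hasFDerivAt_of_hasDerivAt_re_im {U : Set ℂ} (hU : IsOpen U) {f fx fy : ℂ → E}
    (hx : ∀ z ∈ U, HasDerivAt (fun t : ℝ => f ⟨t, z.im⟩) (fx z) z.re)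
    (hy : ∀ z ∈ U, HasDerivAt (fun t : ℝ => f ⟨z.re, t⟩) (fy z) z.im)
    (hcx : ContinuousOn fx U) {z : ℂ} (hz : z ∈ U) :
    HasFDerivAt f (Complex.reCLM.smulRight (fx z) + Complex.imCLM.smulRight (fy z)) z := by
  refine HasFDerivAt.of_isLittleO (isLittleO_iff.2 fun c hc => ?_)
  have hc2 : 0 < c / 2 := half_pos hc
  obtain ⟨δ, hδ, hball⟩ : ∃ δ > 0, Metric.ball z δ ⊆ U ∩ {p | dist (fx p) (fx z) < c / 2} :=
    Metric.mem_nhds_iff.1 <| inter_mem (hU.mem_nhds hz)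
      (Metric.continuousAt_iff'.1 (hcx.continuousAt (hU.mem_nhds hz)) _ hc2)
  -- Split the increment at `⟨z.re, w.im⟩`: the vertical part is controlled by `fy z` alone, the
  -- horizontal one by the mean value inequality along a segment on which `fx` is `c/2`-close
  -- to `fx z`.
  have hvert : ∀ᶠ w in 𝓝 z,
      ‖f ⟨z.re, w.im⟩ - f z - (w.im - z.im) • fy z‖ ≤ c / 2 * ‖w.im - z.im‖ :=
    (Complex.continuous_im.tendsto z).eventually
      (isLittleO_iff.1 (hasDerivAt_iff_isLittleO.1 (hy z hz)) hc2)
  filter_upwards [hvert, Metric.ball_mem_nhds z hδ] with w hw hwz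
  have hseg : ∀ t ∈ uIcc z.re w.re, (⟨t, w.im⟩ : ℂ) ∈ Metric.ball z δ := fun t ht =>
    (Complex.dist_mk_im_le_of_mem_uIcc ht).trans_lt hwz
  have hhor : ‖f w - f ⟨z.re, w.im⟩ - (w.re - z.re) • fx z‖ ≤ c / 2 * ‖w.re - z.re‖ :=
    norm_sub_sub_smul_le_of_hasDerivAt (φ := fun t => f ⟨t, w.im⟩)
      (fun t ht => hx _ (hball (hseg t ht)).1)
      (fun t ht => by simpa [← dist_eq_norm] using (hball (hseg t ht)).2.le)
  have hre : ‖w.re - z.re‖ ≤ ‖w - z‖ := by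
    simpa only [Complex.sub_re, Real.norm_eq_abs] using Complex.abs_re_le_norm (w - z)
  have him : ‖w.im - z.im‖ ≤ ‖w - z‖ := by
    simpa only [Complex.sub_im, Real.norm_eq_abs] using Complex.abs_im_le_norm (w - z)
  calc ‖f w - f z - (Complex.reCLM.smulRight (fx z) + Complex.imCLM.smulRight (fy z)) (w - z)‖
      = ‖(f w - f ⟨z.re, w.im⟩ - (w.re - z.re) • fx z)
          + (f ⟨z.re, w.im⟩ - f z - (w.im - z.im) • fy z)‖ := by
        congr 1; simp; abel
    _ ≤ c / 2 * ‖w.re - z.re‖ + c / 2 * ‖w.im - z.im‖ :=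
        (norm_add_le _ _).trans (add_le_add hhor hw)
    _ ≤ c * ‖w - z‖ := by nlinarith

end PartialDerivatives

namespace Quaternion

/-- `ℍ` as a left `ℂ`-vector space, `z • q = z q` with `ℂ ⊆ ℍ` spanned by `1, i`; holomorphy of
`ℍ`-valued maps on `ℂ` refers to this structure. -/
instance : Module ℂ ℍ[ℝ] := Module.compHom ℍ[ℝ] ofComplex.toRingHom

theorem complex_smul_eq_mul (z : ℂ) (q : ℍ[ℝ]) : z • q = (z : ℍ[ℝ]) * q := rfl

theorem norm_coeComplex (z : ℂ) : ‖(z : ℍ[ℝ])‖ = ‖z‖ := by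
  have h : ‖(z : ℍ[ℝ])‖ ^ 2 = ‖z‖ ^ 2 := by
    rw [sq, ← normSq_eq_norm_mul_self, normSq_def', Complex.sq_norm, Complex.normSq_apply]
    simp [sq]
  exact (sq_eq_sq₀ (norm_nonneg _) (norm_nonneg _)).1 h

instance : NormedSpace ℂ ℍ[ℝ] where
  norm_smul_le z q := by rw [complex_smul_eq_mul, norm_mul, norm_coeComplex]

instance : IsScalarTower ℝ ℂ ℍ[ℝ] where
  smul_assoc r z q := by
    have h : ((r • z : ℂ) : ℍ[ℝ]) = r • (z : ℍ[ℝ]) := by ext <;> simp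
    rw [complex_smul_eq_mul, complex_smul_eq_mul, h, smul_mul_assoc]

theorem coeComplex_I_mul_self : (Complex.I : ℍ[ℝ]) * Complex.I = -1 := by
  rw [← coeComplex_mul, Complex.I_mul_I]
  ext <;> simp

theorem coeComplex_eq_re_add_im_smul (z : ℂ) : (z : ℍ[ℝ]) = (z.re : ℍ[ℝ]) + z.im • Complex.I := by
  ext <;> simp

theorem differentiableOn_of_cauchyRiemann {U : Set ℂ} (hU : IsOpen U) {f fx fy : ℂ → ℍ[ℝ]}
    (hx : ∀ z ∈ U, HasDerivAt (fun t : ℝ => f ⟨t, z.im⟩) (fx z) z.re)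
    (hy : ∀ z ∈ U, HasDerivAt (fun t : ℝ => f ⟨z.re, t⟩) (fy z) z.im)
    (hcx : ContinuousOn fx U) (hCR : ∀ z ∈ U, fx z + Complex.I * fy z = 0) :
    DifferentiableOn ℂ f U := by
  intro z hz
  have hfy : fy z = Complex.I * fx z := by
    have h := congrArg ((Complex.I : ℍ[ℝ]) * ·) (hCR z hz)
    simp only [mul_add, ← mul_assoc, coeComplex_I_mul_self, neg_one_mul, mul_zero] at h
    exact (add_neg_eq_zero.1 h).symm
  have hlin : (((1 : ℂ →L[ℂ] ℂ).smulRight (fx z)).restrictScalars ℝ)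
      = Complex.reCLM.smulRight (fx z) + Complex.imCLM.smulRight (fy z) := by
    refine ContinuousLinearMap.ext fun w => ?_
    simp only [ContinuousLinearMap.coe_restrictScalars', ContinuousLinearMap.smulRight_apply,
      one_apply_eq_self, add_apply, Complex.reCLM_apply,
      Complex.imCLM_apply, complex_smul_eq_mul, hfy]
    rw [coeComplex_eq_re_add_im_smul, add_mul, coe_mul_eq_smul, smul_mul_assoc]
  exact (hasFDerivAt_of_restrictScalars ℝ
    (hasFDerivAt_of_hasDerivAt_re_im hU hx hy hcx hz) hlin).differentiableAt.differentiableWithinAt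

end Quaternion

section Slices

theorem mul_self_of_mem_SpH {u : ℍ[ℝ]} (hu : u ∈ SpH) : u * u = -1 := by
  rw [← sq, sq_eq_neg_normSq.2 hu.1, normSq_eq_norm_mul_self, hu.2, mul_one, coe_one]

theorem coeComplex_I_mem_SpH : (Complex.I : ℍ[ℝ]) ∈ SpH :=
  ⟨by simp, by rw [norm_coeComplex, Complex.norm_I]⟩

/-- Every imaginary unit is conjugate to `i`. -/
theorem exists_ne_zero_coeComplex_I_mul_eq_mul {u : ℍ[ℝ]} (hu : u ∈ SpH) :
    ∃ d ≠ 0, Complex.I * d = d * u := by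
  by_cases h : u = -Complex.I
  · subst h
    let j : ℍ[ℝ] := ⟨0, 0, 1, 0⟩
    refine ⟨j, fun h0 => by simpa [j] using congrArg (·.imJ) h0, ?_⟩
    ext <;> simp only [re_mul, imI_mul, imJ_mul, imK_mul] <;> simp [j]
  · refine ⟨Complex.I + u, fun h0 => h (eq_neg_of_add_eq_zero_right h0), ?_⟩
    rw [mul_add, add_mul, coeComplex_I_mul_self, mul_self_of_mem_SpH hu, add_comm]

theorem exists_mem_SpH_mem_sliceL (q : ℍ[ℝ]) : ∃ u ∈ SpH, q ∈ sliceL u := by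
  by_cases h : q.im = 0
  · exact ⟨Complex.I, coeComplex_I_mem_SpH, q.re, 0, by simpa [h] using (re_add_im q).symm⟩
  · have hn : ‖q.im‖ ≠ 0 := norm_ne_zero_iff.2 h
    refine ⟨‖q.im‖⁻¹ • q.im, ⟨by simp, ?_⟩, q.re, ‖q.im‖, ?_⟩
    · rw [norm_smul, norm_inv, norm_norm, inv_mul_cancel₀ hn]
    · rw [smul_smul, mul_inv_cancel₀ hn, one_smul, re_add_im]

theorem coe_mem_sliceL (u : ℍ[ℝ]) (x : ℝ) : (x : ℍ[ℝ]) ∈ sliceL u := ⟨x, 0, by simp⟩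

theorem commute_of_mem_sliceL {u a b : ℍ[ℝ]} (ha : a ∈ sliceL u) (hb : b ∈ sliceL u) :
    Commute a b := by
  obtain ⟨x, y, rfl⟩ := ha
  obtain ⟨x', y', rfl⟩ := hb
  have hu : Commute (y • u) (y' • u) := ((Commute.refl u).smul_left y).smul_right y'
  exact (coe_commute x _).add_left ((coe_commute x' _).symm.add_right hu)

theorem Commute.quaternion_star_right {a b : ℍ[ℝ]} (h : Commute a b) : Commute a (star b) := by
  rw [star_eq_two_re_sub]
  exact (coe_commute _ a).symm.sub_right h

def sliceMap (u : ℍ[ℝ]) : ℂ →ₗ[ℝ] ℍ[ℝ] where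
  toFun z := (z.re : ℍ[ℝ]) + z.im • u
  map_add' a b := by
    simp only [Complex.add_re, Complex.add_im, coe_add, add_smul]
    abel
  map_smul' r z := by simp [smul_add, smul_smul, coe_mul_eq_smul]

@[simp]
theorem sliceMap_apply (u : ℍ[ℝ]) (z : ℂ) : sliceMap u z = (z.re : ℍ[ℝ]) + z.im • u := rfl

theorem sliceMap_injective {u : ℍ[ℝ]} (hu : u ∈ SpH) : Function.Injective (sliceMap u) := by
  rw [← LinearMap.ker_eq_bot, LinearMap.ker_eq_bot']
  intro z hz
  have hre : z.re = 0 := by simpa [hu.1] using congrArg (·.re) hz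
  have hu0 : u ≠ 0 := by rintro rfl; simp [SpH] at hu
  have him : z.im = 0 := by simpa [hre, hu0] using hz
  exact Complex.ext hre him

theorem isPreconnected_preimage_sliceMap {Ω : Set ℍ[ℝ]} {u : ℍ[ℝ]} (hu : u ∈ SpH)
    (h : IsPreconnected (Ω ∩ sliceL u)) : IsPreconnected (sliceMap u ⁻¹' Ω) := by
  have hrange : range (sliceMap u) = sliceL u := by
    ext q
    exact ⟨fun ⟨z, hz⟩ => ⟨z.re, z.im, hz.symm⟩, fun ⟨x, y, hq⟩ => ⟨⟨x, y⟩, hq.symm⟩⟩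
  have hemb :=
    LinearMap.isClosedEmbedding_of_injective (LinearMap.ker_eq_bot.2 (sliceMap_injective hu))
  rwa [← hemb.isInducing.isPreconnected_image, image_preimage_eq_inter_range, hrange]

end Slices

theorem Complex.frequently_nhdsNE_ofReal {p : ℂ → Prop} {x : ℝ} (h : ∀ᶠ t : ℝ in 𝓝 x, p t) :
    ∃ᶠ z in 𝓝[≠] (x : ℂ), p z :=
  (continuous_ofReal.continuousWithinAt.tendsto_nhdsWithin (s := {x}ᶜ)
    fun _ hy ↦ by simpa using hy).frequently
    (eventually_nhdsWithin_of_eventually_nhds h).frequently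

section IdentityPrinciple

variable {Ω : Set ℍ[ℝ]} {u : ℍ[ℝ]} {f g : ℍ[ℝ] → ℍ[ℝ]}

/-- Left multiplication by `d` with `i d = d u` turns the Cauchy–Riemann equation of `L_u` into
the one of `ℂ`. -/
theorem SliceHolomorphicOn.differentiableOn_mul_comp_sliceMap (hΩ : IsOpen Ω) {d : ℍ[ℝ]}
    (hd : Complex.I * d = d * u) (hf : SliceHolomorphicOn u f Ω) :
    DifferentiableOn ℂ (fun z => d * f (sliceMap u z)) (sliceMap u ⁻¹' Ω) := by
  obtain ⟨fx, fy, hx, hy, hcx, -, hCR⟩ := hf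
  refine differentiableOn_of_cauchyRiemann
    (hΩ.preimage (sliceMap u).continuous_of_finiteDimensional)
    (fx := fun z => d * fx z.re z.im) (fy := fun z => d * fy z.re z.im)
    (fun z hz => (hx z.re z.im hz).const_mul d) (fun z hz => (hy z.re z.im hz).const_mul d)
    ?_ fun z hz => ?_
  · exact continuousOn_const.mul
      (hcx.comp (Complex.continuous_re.prodMk Complex.continuous_im).continuousOn fun z hz => hz)
  · rw [← mul_assoc, hd, mul_assoc, ← mul_add, hCR z.re z.im hz, mul_zero]

theorem SliceHolomorphicOn.eqOn_of_eqOn_real (hu : u ∈ SpH) (hΩ : IsOpen Ω)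
    (hconn : IsPreconnected (Ω ∩ sliceL u)) {x₀ : ℝ} (hx₀ : (x₀ : ℍ[ℝ]) ∈ Ω)
    (hf : SliceHolomorphicOn u f Ω) (hg : SliceHolomorphicOn u g Ω)
    (heq : ∀ x : ℝ, (x : ℍ[ℝ]) ∈ Ω → f x = g x) : EqOn f g (Ω ∩ sliceL u) := by
  obtain ⟨d, hd0, hd⟩ := exists_ne_zero_coeComplex_I_mul_eq_mul hu
  have hU := hΩ.preimage (sliceMap u).continuous_of_finiteDimensional
  have hreal : ∃ᶠ z in 𝓝[≠] (x₀ : ℂ), d * f (sliceMap u z) = d * g (sliceMap u z) :=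
    Complex.frequently_nhdsNE_ofReal <|
      ((continuous_coe.tendsto x₀).eventually (hΩ.mem_nhds hx₀)).mono fun x hx => by
        simp [heq x hx]
  have hslice := ((hf.differentiableOn_mul_comp_sliceMap hΩ hd).analyticOnNhd hU)
    |>.eqOn_of_preconnected_of_frequently_eq
      ((hg.differentiableOn_mul_comp_sliceMap hΩ hd).analyticOnNhd hU)
      (isPreconnected_preimage_sliceMap hu hconn) (by simpa using hx₀) hreal
  rintro _ ⟨hq, x, y, rfl⟩
  exact mul_left_cancel₀ hd0 (hslice (x := ⟨x, y⟩) hq)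

theorem SliceRegularOn.eqOn_of_eqOn_real (hΩ : IsOpen Ω)
    (hconn : ∀ u ∈ SpH, IsPreconnected (Ω ∩ sliceL u)) {x₀ : ℝ} (hx₀ : (x₀ : ℍ[ℝ]) ∈ Ω)
    (hf : SliceRegularOn f Ω) (hg : SliceRegularOn g Ω)
    (heq : ∀ x : ℝ, (x : ℍ[ℝ]) ∈ Ω → f x = g x) : EqOn f g Ω := fun q hq => by
  obtain ⟨u, hu, hqu⟩ := exists_mem_SpH_mem_sliceL q
  exact (hf u hu).eqOn_of_eqOn_real hu hΩ (hconn u hu) hx₀ (hg u hu) heq ⟨hq, hqu⟩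

end IdentityPrinciple

theorem regular_conjugate_of_product_general
    (Ω : Set ℍ[ℝ]) (hΩ : IsSDomain Ω)
    (I J : ℍ[ℝ])
    (F G H K : ℍ[ℝ] → ℍ[ℝ])
    (hFm : Set.MapsTo F (Ω ∩ sliceL I) (sliceL I))
    (hGm : Set.MapsTo G (Ω ∩ sliceL I) (sliceL I))
    (hHm : Set.MapsTo H (Ω ∩ sliceL I) (sliceL I))
    (hKm : Set.MapsTo K (Ω ∩ sliceL I) (sliceL I))
    -- the splitting components of the regular product `f ∗ g`
    (P Q : ℍ[ℝ] → ℍ[ℝ])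
    (hP : ∀ z : ℍ[ℝ], P z = F z * H z - G z * star (K (star z)))
    (hQ : ∀ z : ℍ[ℝ], Q z = F z * K z + G z * star (H (star z)))
    -- `c₁ = (f ∗ g)ᶜ`
    (c₁ : ℍ[ℝ] → ℍ[ℝ]) (hc₁reg : SliceRegularOn c₁ Ω)
    (hc₁ : ∀ z ∈ Ω ∩ sliceL I, c₁ z = star (P (star z)) - Q z * J)
    -- the splitting components of `gᶜ = H₂ + K₂ J` and of `fᶜ = F₃ + G₃ J`
    (H₂ K₂ F₃ G₃ : ℍ[ℝ] → ℍ[ℝ])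
    (hH₂ : ∀ z : ℍ[ℝ], H₂ z = star (H (star z))) (hK₂ : ∀ z : ℍ[ℝ], K₂ z = -K z)
    (hF₃ : ∀ z : ℍ[ℝ], F₃ z = star (F (star z))) (hG₃ : ∀ z : ℍ[ℝ], G₃ z = -G z)
    -- `c₂ = gᶜ ∗ fᶜ`
    (c₂ : ℍ[ℝ] → ℍ[ℝ]) (hc₂reg : SliceRegularOn c₂ Ω)
    (hc₂ : ∀ z ∈ Ω ∩ sliceL I, c₂ z =
      (H₂ z * F₃ z - K₂ z * star (G₃ (star z))) +
        (H₂ z * G₃ z + K₂ z * star (F₃ (star z))) * J) :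
    Set.EqOn c₁ c₂ Ω := by
  obtain ⟨hΩo, -, ⟨x₀, hx₀⟩, hslices⟩ := hΩ
  refine SliceRegularOn.eqOn_of_eqOn_real hΩo (fun u hu => (hslices u hu).isPreconnected) hx₀
    hc₁reg hc₂reg fun x hx => ?_
  have hxI : (x : ℍ[ℝ]) ∈ Ω ∩ sliceL I := ⟨hx, coe_mem_sliceL I x⟩
  have hFK : F x * K x = K x * F x := commute_of_mem_sliceL (hFm hxI) (hKm hxI)
  have hGH : G x * star (H x) = star (H x) * G x :=
    (commute_of_mem_sliceL (hGm hxI) (hHm hxI)).quaternion_star_right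
  rw [hc₁ x hxI, hc₂ x hxI]
  simp only [hP, hQ, hH₂, hK₂, hF₃, hG₃, star_coe, star_star, star_sub, star_mul, star_neg,
    neg_mul, mul_neg, neg_neg]
  rw [hFK, hGH]
  noncomm_ring

/-- `(f ∗ g)ᶜ = gᶜ ∗ fᶜ`. -/
theorem regular_conjugate_of_product
    (Ω : Set ℍ[ℝ]) (hΩ : IsSDomain Ω) (hax : AxSymm Ω)
    (f g : ℍ[ℝ] → ℍ[ℝ]) (hf : SliceRegularOn f Ω) (hg : SliceRegularOn g Ω)
    (I J : ℍ[ℝ]) (hI : I ∈ SpH) (hJ : J ∈ SpH) (hperp : (I * star J).re = 0)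
    (F G H K : ℍ[ℝ] → ℍ[ℝ])
    (hF : SliceHolomorphicOn I F (Ω ∩ sliceL I)) (hFm : Set.MapsTo F (Ω ∩ sliceL I) (sliceL I))
    (hG : SliceHolomorphicOn I G (Ω ∩ sliceL I)) (hGm : Set.MapsTo G (Ω ∩ sliceL I) (sliceL I))
    (hH : SliceHolomorphicOn I H (Ω ∩ sliceL I)) (hHm : Set.MapsTo H (Ω ∩ sliceL I) (sliceL I))
    (hK : SliceHolomorphicOn I K (Ω ∩ sliceL I)) (hKm : Set.MapsTo K (Ω ∩ sliceL I) (sliceL I))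
    (hfs : ∀ z ∈ Ω ∩ sliceL I, f z = F z + G z * J)
    (hgs : ∀ z ∈ Ω ∩ sliceL I, g z = H z + K z * J)
    -- the splitting components of the regular product `f ∗ g`
    (P Q : ℍ[ℝ] → ℍ[ℝ])
    (hP : ∀ z : ℍ[ℝ], P z = F z * H z - G z * star (K (star z)))
    (hQ : ∀ z : ℍ[ℝ], Q z = F z * K z + G z * star (H (star z)))
    -- `c₁ = (f ∗ g)ᶜ`
    (c₁ : ℍ[ℝ] → ℍ[ℝ]) (hc₁reg : SliceRegularOn c₁ Ω)
    (hc₁ : ∀ z ∈ Ω ∩ sliceL I, c₁ z = star (P (star z)) - Q z * J)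
    -- the splitting components of `gᶜ = H₂ + K₂ J` and of `fᶜ = F₃ + G₃ J`
    (H₂ K₂ F₃ G₃ : ℍ[ℝ] → ℍ[ℝ])
    (hH₂ : ∀ z : ℍ[ℝ], H₂ z = star (H (star z))) (hK₂ : ∀ z : ℍ[ℝ], K₂ z = -K z)
    (hF₃ : ∀ z : ℍ[ℝ], F₃ z = star (F (star z))) (hG₃ : ∀ z : ℍ[ℝ], G₃ z = -G z)
    -- `c₂ = gᶜ ∗ fᶜ`
    (c₂ : ℍ[ℝ] → ℍ[ℝ]) (hc₂reg : SliceRegularOn c₂ Ω)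
    (hc₂ : ∀ z ∈ Ω ∩ sliceL I, c₂ z =
      (H₂ z * F₃ z - K₂ z * star (G₃ (star z))) +
        (H₂ z * G₃ z + K₂ z * star (F₃ (star z))) * J) :
    Set.EqOn c₁ c₂ Ω :=
  regular_conjugate_of_product_general Ω hΩ I J F G H K hFm hGm hHm hKm P Q hP hQ c₁ hc₁reg hc₁ H₂
    K₂ F₃ G₃ hH₂ hK₂ hF₃ hG₃ c₂ hc₂reg hc₂
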